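/- MLE coverage lower bound (coarse rate): for any n ≥ d ≥ 2 and B ≥ log(5n), with Y = [d], feature map φ(y) = B·e_y, parameter set Θ = {θ ∈ ℝ^d : ‖θ‖_∞ ≤ 1}, softmax models π_θ(y) ∝ exp(B θ_y), and data distribution π_D = π_{θ*} with θ* = (log(4n)/(2B))·(e₁ − Σ_{j≥2} e_j), the following holds: with probability at least 0.5 over n i.i.d. samples, the maximum likelihood estimator π̂ satisfies Pcov_N(π_D ‖ π̂) ≥ (d−1)/(10n) for every N ≤ e^B. -/

import Mathlib

open scoped BigOperators Classical
open Finset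

noncomputable def softmaxB (d : ℕ) (B : ℝ) (θ : Fin d → ℝ) (y : Fin d) : ℝ :=
  Real.exp (B * θ y) / ∑ i, Real.exp (B * θ i)

noncomputable def thetaStar (d n : ℕ) (B : ℝ) : Fin d → ℝ :=
  fun j => if (j : ℕ) = 0 then Real.log (4 * n) / (2 * B) else -(Real.log (4 * n) / (2 * B))

section Aux
variable {d : ℕ} (B : ℝ)

lemma sumExp_pos (hd : 0 < d) (θ : Fin d → ℝ) : 0 < ∑ i, Real.exp (B * θ i) := by
  have : Nonempty (Fin d) := ⟨⟨0, hd⟩⟩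
  exact Finset.sum_pos (fun i _ => Real.exp_pos _) Finset.univ_nonempty

lemma softmaxB_pos (hd : 0 < d) (θ : Fin d → ℝ) (y : Fin d) : 0 < softmaxB d B θ y :=
  div_pos (Real.exp_pos _) (sumExp_pos B hd θ)

lemma softmaxB_sum_one (hd : 0 < d) (θ : Fin d → ℝ) : ∑ y, softmaxB d B θ y = 1 := by
  unfold softmaxB
  rw [← Finset.sum_div]
  exact div_self (ne_of_gt (sumExp_pos B hd θ))

lemma log_softmaxB (hd : 0 < d) (θ : Fin d → ℝ) (y : Fin d) :
    Real.log (softmaxB d B θ y) = B * θ y - Real.log (∑ i, Real.exp (B * θ i)) := by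
  unfold softmaxB
  rw [Real.log_div (Real.exp_ne_zero _) (ne_of_gt (sumExp_pos B hd θ)), Real.log_exp]

lemma softmaxB_shift (θ : Fin d → ℝ) (c : ℝ) (y : Fin d) :
    softmaxB d B (fun j => θ j + c) y = softmaxB d B θ y := by
  unfold softmaxB
  simp only [mul_add, Real.exp_add]
  rw [← Finset.sum_mul, mul_div_mul_right _ _ (Real.exp_ne_zero (B * c))]

end Aux

lemma pval {n d : ℕ} {B : ℝ} (hd : 2 ≤ d) (hn : 1 ≤ n) (hB0 : 0 < B) (y : Fin d) :
    softmaxB d B (thetaStar d n B) y =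
      if (y : ℕ) = 0 then (4*n : ℝ)/(4*n + ((d:ℝ)-1)) else 1/(4*n + ((d:ℝ)-1)) := by
  haveI : NeZero d := ⟨by omega⟩
  have h4n : (0:ℝ) < 4*n := by positivity
  set r : ℝ := Real.exp (Real.log (4*n) / 2) with hrdef
  have hr : 0 < r := Real.exp_pos _
  have hrr : r * r = 4*n := by
    rw [hrdef, ← Real.exp_add]
    rw [show Real.log (4*n)/2 + Real.log (4*n)/2 = Real.log (4*n) by ring]
    exact Real.exp_log h4n
  have hBt : B * (Real.log (4*n) / (2*B)) = Real.log (4*n) / 2 := by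
    field_simp
  have hexp : ∀ i : Fin d, Real.exp (B * thetaStar d n B i) =
      if (i : ℕ) = 0 then r else r⁻¹ := by
    intro i
    unfold thetaStar
    by_cases h : (i : ℕ) = 0 <;> simp [h, hBt, mul_neg, Real.exp_neg, hrdef]
  have hsum : ∑ i : Fin d, Real.exp (B * thetaStar d n B i) = r + ((d:ℝ)-1) * r⁻¹ := by
    simp only [hexp]
    rw [Fintype.sum_eq_add_sum_compl (0 : Fin d)]
    simp only [Fin.val_zero, if_true]
    rw [Finset.sum_congr rfl (fun i hi => by
      rw [if_neg]
      simp only [Finset.mem_compl, Finset.mem_singleton] at hi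
      exact fun h => hi (Fin.ext h))]
    rw [Finset.sum_const, Finset.card_compl, Finset.card_singleton, Fintype.card_fin,
      nsmul_eq_mul]
    have : ((d - 1 : ℕ) : ℝ) = (d:ℝ) - 1 := by
      have : (1:ℕ) ≤ d := by omega
      push_cast [Nat.cast_sub this]
      ring
    rw [this]
  have hden : (0:ℝ) < r + ((d:ℝ)-1) * r⁻¹ := by
    have : (0:ℝ) ≤ ((d:ℝ)-1) * r⁻¹ := by
      apply mul_nonneg _ (le_of_lt (inv_pos.mpr hr))
      have : (2:ℝ) ≤ d := by exact_mod_cast hd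
      linarith
    linarith
  have hden2 : (0:ℝ) < 4*n + ((d:ℝ)-1) := by
    have : (2:ℝ) ≤ d := by exact_mod_cast hd
    linarith
  unfold softmaxB
  rw [hsum, hexp]
  by_cases h : (y:ℕ) = 0 <;> simp only [h, if_true, if_false] <;>
    rw [div_eq_div_iff hden.ne' hden2.ne'] <;> field_simp <;> nlinarith [hrr, hr]

section Det
variable {n d : ℕ} {B : ℝ}

/-- Any maximizer in Θ sets unobserved coordinates to -1. -/
lemma unobs_eq_neg_one (hn : 0 < n) (hd : 0 < d) (hB0 : 0 < B)
    (s : Fin n → Fin d) (θ : Fin d → ℝ) (hθ : ∀ j, |θ j| ≤ 1)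
    (hmax : ∀ θ' : Fin d → ℝ, (∀ j, |θ' j| ≤ 1) →
      (∑ i, Real.log (softmaxB d B θ' (s i))) ≤ ∑ i, Real.log (softmaxB d B θ (s i)))
    (y : Fin d) (hy : ∀ i, s i ≠ y) : θ y = -1 := by
  by_contra hne
  have hgt : -1 < θ y := lt_of_le_of_ne (neg_le_of_abs_le (hθ y)) (Ne.symm hne)
  classical
  set θ' := Function.update θ y (-1) with hθ'
  have hθ'mem : ∀ j, |θ' j| ≤ 1 := by
    intro j
    by_cases h : j = y
    · subst h; simp [θ']
    · rw [hθ', Function.update_of_ne h]; exact hθ j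
  have hZlt : ∑ i, Real.exp (B * θ' i) < ∑ i, Real.exp (B * θ i) := by
    apply Finset.sum_lt_sum
    · intro i _
      by_cases h : i = y
      · subst h
        simp only [θ', Function.update_self]
        exact le_of_lt (Real.exp_lt_exp.mpr (by nlinarith))
      · rw [hθ', Function.update_of_ne h]
    · exact ⟨y, Finset.mem_univ y, by
        simp only [θ', Function.update_self]
        exact Real.exp_lt_exp.mpr (by nlinarith)⟩
  have hlog : Real.log (∑ i, Real.exp (B * θ' i)) < Real.log (∑ i, Real.exp (B * θ i)) :=
    Real.log_lt_log (sumExp_pos B hd θ') hZlt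
  have hlt : (∑ i, Real.log (softmaxB d B θ (s i))) < ∑ i, Real.log (softmaxB d B θ' (s i)) := by
    have hne' : (Finset.univ : Finset (Fin n)).Nonempty := by
      exact ⟨⟨0, hn⟩, Finset.mem_univ _⟩
    apply Finset.sum_lt_sum_of_nonempty hne'
    intro i _
    rw [log_softmaxB B hd, log_softmaxB B hd]
    have : θ' (s i) = θ (s i) := by rw [hθ', Function.update_of_ne (hy i)]
    rw [this]
    linarith
  exact absurd (hmax θ' hθ'mem) (not_le.mpr hlt)

/-- Any maximizer has partition function at least `exp B`. -/
lemma Zhat_ge (hn : 0 < n) (hd : 0 < d) (hB0 : 0 < B)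
    (s : Fin n → Fin d) (θ : Fin d → ℝ) (hθ : ∀ j, |θ j| ≤ 1)
    (hmax : ∀ θ' : Fin d → ℝ, (∀ j, |θ' j| ≤ 1) →
      (∑ i, Real.log (softmaxB d B θ' (s i))) ≤ ∑ i, Real.log (softmaxB d B θ (s i)))
    (y0 : Fin d) (hy0 : ∀ i, s i ≠ y0) :
    Real.exp B ≤ ∑ i, Real.exp (B * θ i) := by
  have hne : (Finset.univ : Finset (Fin d)).Nonempty := ⟨⟨0, hd⟩, Finset.mem_univ _⟩
  set M := Finset.univ.sup' hne θ with hM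
  obtain ⟨j, -, hj⟩ := Finset.exists_mem_eq_sup' hne θ
  have hMle : M ≤ 1 := by rw [hM, hj]; exact le_of_abs_le (hθ j)
  have hM1 : M = 1 := by
    by_contra hMne
    have hMlt : M < 1 := lt_of_le_of_ne hMle hMne
    set θ2 : Fin d → ℝ := fun k => θ k + (1 - M) with hθ2
    have hθ2mem : ∀ k, |θ2 k| ≤ 1 := by
      intro k
      rw [abs_le]
      constructor
      · have := neg_le_of_abs_le (hθ k); simp only [hθ2]; linarith
      · have : θ k ≤ M := Finset.le_sup' θ (Finset.mem_univ k)
        simp only [hθ2]; linarith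
    have hsame : ∀ i, Real.log (softmaxB d B θ2 (s i)) = Real.log (softmaxB d B θ (s i)) := by
      intro i; rw [show softmaxB d B θ2 (s i) = softmaxB d B θ (s i) from softmaxB_shift B θ (1-M) (s i)]
    have hmax2 : ∀ θ' : Fin d → ℝ, (∀ k, |θ' k| ≤ 1) →
        (∑ i, Real.log (softmaxB d B θ' (s i))) ≤ ∑ i, Real.log (softmaxB d B θ2 (s i)) := by
      intro θ' hθ'
      calc (∑ i, Real.log (softmaxB d B θ' (s i)))
          ≤ ∑ i, Real.log (softmaxB d B θ (s i)) := hmax θ' hθ'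
        _ = ∑ i, Real.log (softmaxB d B θ2 (s i)) := by
            exact (Finset.sum_congr rfl (fun i _ => (hsame i).symm))
    have h2 : θ2 y0 = -1 := unobs_eq_neg_one hn hd hB0 s θ2 hθ2mem hmax2 y0 hy0
    have h1 : θ y0 = -1 := unobs_eq_neg_one hn hd hB0 s θ hθ hmax y0 hy0
    rw [hθ2] at h2
    simp only [h1] at h2
    have : M = 1 := by linarith
    exact hMne this
  have hje : θ j = 1 := by rw [hM, hj] at hM1; exact hM1
  calc Real.exp B = Real.exp (B * θ j) := by rw [hje, mul_one]
    _ ≤ ∑ i, Real.exp (B * θ i) :=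
        Finset.single_le_sum (f := fun i => Real.exp (B * θ i))
          (fun i _ => le_of_lt (Real.exp_pos _)) (Finset.mem_univ j)

end Det

/-- If at least `(d-1)/2` nonzero symbols are unobserved, every MLE is badly covered. -/
lemma det_good {n d : ℕ} {B : ℝ} (hd : 2 ≤ d) (hnd : d ≤ n) (hB : Real.log (5 * n) ≤ B)
    (s : Fin n → Fin d)
    (hU : (d - 1 : ℕ) ≤
      2 * (Finset.univ.filter (fun y : Fin d => (y : ℕ) ≠ 0 ∧ ∀ i, s i ≠ y)).card) :
    ∀ θh : Fin d → ℝ, (∀ j, |θh j| ≤ 1) →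
      (∀ θ : Fin d → ℝ, (∀ j, |θ j| ≤ 1) →
        (∑ i, Real.log (softmaxB d B θ (s i))) ≤ ∑ i, Real.log (softmaxB d B θh (s i))) →
      ∀ N : ℝ, N ≤ Real.exp B →
        (∑ y, softmaxB d B (thetaStar d n B) y *
            (if N ≤ softmaxB d B (thetaStar d n B) y / softmaxB d B θh y
              then 1 else 0)) ≥ ((d : ℝ) - 1) / (10 * n) := by
  intro θh hθh hmax N hN
  have hn : 1 ≤ n := le_trans (by omega) hnd
  have hn' : 0 < n := hn
  have hd' : 0 < d := by omega
  have h5n : (1:ℝ) < 5 * n := by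
    have : (1:ℝ) ≤ (n:ℝ) := by exact_mod_cast hn
    linarith
  have hB0 : 0 < B := lt_of_lt_of_le (Real.log_pos h5n) hB
  have hexpB : (5:ℝ) * n ≤ Real.exp B := by
    rw [← Real.exp_log (by linarith : (0:ℝ) < 5 * n)]
    exact Real.exp_le_exp.mpr hB
  set U := Finset.univ.filter (fun y : Fin d => (y : ℕ) ≠ 0 ∧ ∀ i, s i ≠ y) with hUdef
  have hUne : U.Nonempty := by
    rw [← Finset.card_pos]
    omega
  obtain ⟨y0, hy0U⟩ := hUne
  have hy0 : ∀ i, s i ≠ y0 := (Finset.mem_filter.mp hy0U).2.2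
  have hZh : Real.exp B ≤ ∑ i, Real.exp (B * θh i) := Zhat_ge hn' hd' hB0 s θh hθh hmax y0 hy0
  set A : ℝ := 4 * n + ((d:ℝ) - 1) with hAdef
  have hdR : (2:ℝ) ≤ (d:ℝ) := by exact_mod_cast hd
  have hndR : (d:ℝ) ≤ (n:ℝ) := by exact_mod_cast hnd
  have hnR : (1:ℝ) ≤ (n:ℝ) := by exact_mod_cast hn
  have hApos : 0 < A := by rw [hAdef]; linarith
  have hA5n : A ≤ 5 * n := by rw [hAdef]; linarith
  -- each unobserved nonzero symbol has indicator one
  have hind : ∀ y ∈ U,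
      (if N ≤ softmaxB d B (thetaStar d n B) y / softmaxB d B θh y then (1:ℝ) else 0) = 1 := by
    intro y hyU
    obtain ⟨-, hyne, hyunobs⟩ := Finset.mem_filter.mp hyU
    rw [if_pos]
    have hθhy : θh y = -1 := unobs_eq_neg_one hn' hd' hB0 s θh hθh hmax y hyunobs
    have hpy : softmaxB d B (thetaStar d n B) y = 1 / A := by
      rw [pval hd hn hB0 y, if_neg hyne]
    have hsm : softmaxB d B θh y = Real.exp (-B) / ∑ i, Real.exp (B * θh i) := by
      unfold softmaxB
      rw [hθhy]
      ring_nf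
    rw [hpy, hsm]
    set Zh := ∑ i, Real.exp (B * θh i) with hZhdef
    have hZhpos : 0 < Zh := sumExp_pos B hd' θh
    have key : (1/A) / (Real.exp (-B)/Zh) = Zh * Real.exp B / A := by
      rw [Real.exp_neg]
      field_simp
    rw [key]
    have hAZh : A ≤ Zh := le_trans hA5n (le_trans hexpB hZh)
    have : Real.exp B ≤ Zh * Real.exp B / A := by
      rw [le_div_iff₀ hApos]
      nlinarith [Real.exp_pos B]
    linarith
  have hnonneg : ∀ y ∈ Finset.univ, (0:ℝ) ≤ softmaxB d B (thetaStar d n B) y *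
      (if N ≤ softmaxB d B (thetaStar d n B) y / softmaxB d B θh y then (1:ℝ) else 0) := by
    intro y _
    apply mul_nonneg (le_of_lt (softmaxB_pos B hd' _ y))
    split <;> norm_num
  have hsub : ∑ y ∈ U, softmaxB d B (thetaStar d n B) y *
      (if N ≤ softmaxB d B (thetaStar d n B) y / softmaxB d B θh y then (1:ℝ) else 0) ≤
      ∑ y, softmaxB d B (thetaStar d n B) y *
      (if N ≤ softmaxB d B (thetaStar d n B) y / softmaxB d B θh y then (1:ℝ) else 0) :=
    Finset.sum_le_sum_of_subset_of_nonneg (Finset.subset_univ U) (fun y hy _ => hnonneg y hy)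
  have hsumU : ∑ y ∈ U, softmaxB d B (thetaStar d n B) y *
      (if N ≤ softmaxB d B (thetaStar d n B) y / softmaxB d B θh y then (1:ℝ) else 0) =
      (U.card : ℝ) * (1/A) := by
    rw [Finset.sum_congr rfl (fun y hy => by
      obtain ⟨-, hyne, -⟩ := Finset.mem_filter.mp hy
      rw [hind y hy, pval hd hn hB0 y, if_neg hyne, mul_one])]
    rw [Finset.sum_const, nsmul_eq_mul]
  have hcardR : ((d:ℝ) - 1) ≤ 2 * (U.card : ℝ) := by
    have := hU
    have h2 : ((d - 1 : ℕ) : ℝ) ≤ ((2 * U.card : ℕ) : ℝ) := by exact_mod_cast this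
    push_cast at h2
    have hone : (1:ℕ) ≤ d := by omega
    rw [Nat.cast_sub hone] at h2
    push_cast at h2
    linarith
  have h1 : ((d:ℝ)-1)/(10*n) ≤ (U.card:ℝ)/(5*n) := by
    rw [div_le_div_iff₀ (by linarith) (by linarith)]
    nlinarith
  have h2 : (U.card:ℝ)/(5*n) ≤ (U.card:ℝ)/A := by
    gcongr
  rw [ge_iff_le]
  calc ((d:ℝ)-1)/(10*n) ≤ (U.card:ℝ)/A := le_trans h1 h2
    _ = (U.card:ℝ) * (1/A) := by rw [mul_one_div]
    _ ≤ _ := by rw [← hsumU]; exact hsub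

lemma total_mass {n d : ℕ} (p : Fin d → ℝ) (hp1 : ∑ y, p y = 1) :
    ∑ s : Fin n → Fin d, ∏ j, p (s j) = 1 := by
  rw [← Fintype.sum_pow, hp1, one_pow]

lemma marginal {n d : ℕ} (p : Fin d → ℝ) (hp1 : ∑ y, p y = 1)
    (i : Fin n) (y0 : Fin d) :
    ∑ s : Fin n → Fin d, (∏ j, p (s j)) * (if s i = y0 then (1:ℝ) else 0) = p y0 := by
  classical
  set g : Fin d → ℝ := fun z => p z * (if z = y0 then 1 else 0) with hg
  set F : Fin n → Fin d → ℝ := Function.update (fun _ => p) i g with hF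
  have hFs : ∀ s : Fin n → Fin d,
      (∏ j, F j (s j)) = (∏ j, p (s j)) * (if s i = y0 then (1:ℝ) else 0) := by
    intro s
    have heq : (fun j => F j (s j)) = Function.update (fun j => p (s j)) i (g (s i)) := by
      funext j
      by_cases h : j = i
      · subst h; simp [hF]
      · rw [hF, Function.update_of_ne h, Function.update_of_ne h]
    calc (∏ j, F j (s j)) = ∏ j, Function.update (fun j => p (s j)) i (g (s i)) j := by
          rw [← heq]
      _ = g (s i) * ∏ j ∈ Finset.univ \ {i}, p (s j) :=
          Finset.prod_update_of_mem (Finset.mem_univ i) _ _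
      _ = (∏ j, p (s j)) * (if s i = y0 then (1:ℝ) else 0) := by
          rw [Finset.prod_eq_mul_prod_sdiff_singleton_of_mem (Finset.mem_univ i) (fun j => p (s j))]
          rw [hg]; ring
  calc ∑ s : Fin n → Fin d, (∏ j, p (s j)) * (if s i = y0 then (1:ℝ) else 0)
      = ∑ s : Fin n → Fin d, ∏ j, F j (s j) :=
        Finset.sum_congr rfl (fun s _ => (hFs s).symm)
    _ = ∏ j, ∑ z, F j z := (Fintype.prod_sum F).symm
    _ = p y0 := by
        have heq2 : (fun j => ∑ z, F j z) = Function.update (fun _ : Fin n => (1:ℝ)) i (p y0) := by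
          funext j
          by_cases h : j = i
          · subst h
            simp only [hF, Function.update_self, Function.update_self, hg]
            simp [mul_ite, mul_one, mul_zero, Finset.sum_ite_eq']
          · rw [hF]
            rw [show Function.update (fun _ : Fin n => p) i g j = p from Function.update_of_ne h _ _]
            rw [Function.update_of_ne h, hp1]
        calc (∏ j, ∑ z, F j z) = ∏ j, Function.update (fun _ : Fin n => (1:ℝ)) i (p y0) j := by
              rw [← heq2]
          _ = p y0 * ∏ j ∈ Finset.univ \ {i}, (1:ℝ) :=
              Finset.prod_update_of_mem (Finset.mem_univ i) _ _
          _ = p y0 := by rw [Finset.prod_const_one, mul_one]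

lemma cardA {d : ℕ} (hd : 2 ≤ d) :
    (Finset.univ.filter (fun y : Fin d => (y : ℕ) ≠ 0)).card = d - 1 := by
  classical
  haveI : NeZero d := ⟨by omega⟩
  have h := Finset.card_filter_add_card_filter_not
    (s := (Finset.univ : Finset (Fin d))) (p := fun y : Fin d => (y : ℕ) = 0)
  have h1 : (Finset.univ.filter (fun y : Fin d => (y : ℕ) = 0)) = {(0 : Fin d)} := by
    ext y
    simp only [Finset.mem_filter, Finset.mem_univ, true_and, Finset.mem_singleton,
      Fin.ext_iff, Fin.val_zero]
  rw [h1] at h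
  simp only [Finset.card_singleton, Finset.card_univ, Fintype.card_fin] at h
  have h2 : (Finset.univ.filter (fun y : Fin d => ¬(y : ℕ) = 0)) =
      (Finset.univ.filter (fun y : Fin d => (y : ℕ) ≠ 0)) := rfl
  rw [h2] at h
  omega

lemma count_split {n d : ℕ} (hd : 2 ≤ d) (s : Fin n → Fin d) :
    (Finset.univ.filter (fun y : Fin d => (y : ℕ) ≠ 0 ∧ ∀ i, s i ≠ y)).card +
    (Finset.univ.filter (fun y : Fin d => (y : ℕ) ≠ 0 ∧ ∃ i, s i = y)).card = d - 1 := by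
  classical
  have h := Finset.card_filter_add_card_filter_not
    (s := (Finset.univ.filter (fun y : Fin d => (y : ℕ) ≠ 0)))
    (p := fun y : Fin d => ∀ i, s i ≠ y)
  rw [Finset.filter_filter, Finset.filter_filter] at h
  rw [cardA hd] at h
  have h2 : (Finset.univ.filter (fun y : Fin d => (y : ℕ) ≠ 0 ∧ ¬∀ i, s i ≠ y)) =
      (Finset.univ.filter (fun y : Fin d => (y : ℕ) ≠ 0 ∧ ∃ i, s i = y)) := by
    apply Finset.filter_congr
    intro y _
    constructor
    · rintro ⟨hy, hex⟩; push_neg at hex; exact ⟨hy, hex⟩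
    · rintro ⟨hy, hex⟩; exact ⟨hy, by push_neg; exact hex⟩
  rw [h2] at h
  exact h

/-- MLE coverage lower bound (coarse rate): for `n ≥ d ≥ 2` and `B ≥ log(5n)`, with
data distribution `π_D = π_{θ*}`, with probability at least `1/2` over `n` i.i.d.
samples, every maximum likelihood estimator `θ̂` over `Θ = {‖θ‖_∞ ≤ 1}` satisfies
`Pcov_N(π_D ‖ π_{θ̂}) ≥ (d−1)/(10n)` for every `N ≤ e^B`. -/
theorem mle_coverage_lower_coarse (n d : ℕ) (hd : 2 ≤ d) (hnd : d ≤ n)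
    (B : ℝ) (hB : Real.log (5 * n) ≤ B) :
    (∑ s : Fin n → Fin d, (∏ i, softmaxB d B (thetaStar d n B) (s i)) *
        (if ∀ θh : Fin d → ℝ, (∀ j, |θh j| ≤ 1) →
            (∀ θ : Fin d → ℝ, (∀ j, |θ j| ≤ 1) →
              (∑ i, Real.log (softmaxB d B θ (s i))) ≤
                ∑ i, Real.log (softmaxB d B θh (s i))) →
            ∀ N : ℝ, N ≤ Real.exp B →
              (∑ y, softmaxB d B (thetaStar d n B) y *
                  (if N ≤ softmaxB d B (thetaStar d n B) y / softmaxB d B θh y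
                    then 1 else 0)) ≥ ((d : ℝ) - 1) / (10 * n)
          then 1 else 0)) ≥ 1 / 2 := by
  classical
  have hn : 1 ≤ n := le_trans (by omega) hnd
  have hd' : 0 < d := by omega
  have hdR : (2:ℝ) ≤ (d:ℝ) := by exact_mod_cast hd
  have hndR : (d:ℝ) ≤ (n:ℝ) := by exact_mod_cast hnd
  have hnR : (1:ℝ) ≤ (n:ℝ) := by exact_mod_cast hn
  have h5n : (1:ℝ) < 5 * n := by linarith
  have hB0 : 0 < B := lt_of_lt_of_le (Real.log_pos h5n) hB
  set p : Fin d → ℝ := softmaxB d B (thetaStar d n B) with hp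
  have hp1 : ∑ y, p y = 1 := softmaxB_sum_one B hd' _
  have hppos : ∀ y, 0 < p y := softmaxB_pos B hd' _
  have hw : ∀ s : Fin n → Fin d, 0 ≤ ∏ j, p (s j) :=
    fun s => Finset.prod_nonneg fun j _ => (hppos _).le
  set A : ℝ := 4 * n + ((d:ℝ) - 1) with hAdef
  have hApos : 0 < A := by rw [hAdef]; linarith
  -- Step A: the big indicator dominates the indicator of the good event
  have stepA : ∀ s : Fin n → Fin d,
      (if (d - 1 : ℕ) ≤
          2 * (Finset.univ.filter (fun y : Fin d => (y : ℕ) ≠ 0 ∧ ∀ i, s i ≠ y)).card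
        then (1:ℝ) else 0) ≤
      (if ∀ θh : Fin d → ℝ, (∀ j, |θh j| ≤ 1) →
            (∀ θ : Fin d → ℝ, (∀ j, |θ j| ≤ 1) →
              (∑ i, Real.log (softmaxB d B θ (s i))) ≤
                ∑ i, Real.log (softmaxB d B θh (s i))) →
            ∀ N : ℝ, N ≤ Real.exp B →
              (∑ y, softmaxB d B (thetaStar d n B) y *
                  (if N ≤ softmaxB d B (thetaStar d n B) y / softmaxB d B θh y
                    then 1 else 0)) ≥ ((d : ℝ) - 1) / (10 * n)
          then (1:ℝ) else 0) := by
    intro s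
    by_cases hG : (d - 1 : ℕ) ≤
        2 * (Finset.univ.filter (fun y : Fin d => (y : ℕ) ≠ 0 ∧ ∀ i, s i ≠ y)).card
    · rw [if_pos hG, if_pos (det_good hd hnd hB s hG)]
    · rw [if_neg hG]
      split <;> norm_num
  -- the observed-count random variable
  set O : (Fin n → Fin d) → ℕ :=
    fun s => (Finset.univ.filter (fun y : Fin d => (y : ℕ) ≠ 0 ∧ ∃ i, s i = y)).card with hO
  -- abbreviation for the good event
  set G : (Fin n → Fin d) → Prop := fun s => (d - 1 : ℕ) ≤
      2 * (Finset.univ.filter (fun y : Fin d => (y : ℕ) ≠ 0 ∧ ∀ i, s i ≠ y)).card with hG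
  have hpA : ∀ y : Fin d, (y:ℕ) ≠ 0 → p y = 1 / A := by
    intro y hy; rw [hp, pval hd hn hB0 y, if_neg hy]
  -- pointwise bound on the observed count
  have hOle : ∀ s : Fin n → Fin d, ((O s : ℝ)) ≤
      ∑ y ∈ Finset.univ.filter (fun y : Fin d => (y:ℕ) ≠ 0),
        ∑ i, (if s i = y then (1:ℝ) else 0) := by
    intro s
    have h1 : ((O s : ℕ) : ℝ)
        = ∑ y ∈ Finset.univ.filter (fun y : Fin d => (y:ℕ) ≠ 0),
            (if ∃ i, s i = y then (1:ℝ) else 0) := by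
      simp only [hO]
      rw [← Finset.filter_filter, Finset.card_filter]
      push_cast
      rfl
    rw [h1]
    apply Finset.sum_le_sum
    intro y hy
    by_cases hex : ∃ i, s i = y
    · rw [if_pos hex]
      obtain ⟨i0, hi0⟩ := hex
      simpa [hi0] using Finset.single_le_sum (f := fun i => if s i = y then (1:ℝ) else 0)
        (fun i _ => by by_cases h : s i = y <;> simp [h]) (Finset.mem_univ i0)
    · rw [if_neg hex]
      exact Finset.sum_nonneg (fun i _ => by split <;> norm_num)
  -- expectation bound on the observed count
  have hEO : ∑ s : Fin n → Fin d, (∏ j, p (s j)) * (O s : ℝ) ≤ (n:ℝ) * (((d:ℝ)-1) / A) := by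
    calc ∑ s : Fin n → Fin d, (∏ j, p (s j)) * (O s : ℝ)
        ≤ ∑ s : Fin n → Fin d, (∏ j, p (s j)) *
            (∑ y ∈ Finset.univ.filter (fun y : Fin d => (y:ℕ) ≠ 0),
              ∑ i, (if s i = y then (1:ℝ) else 0)) :=
          Finset.sum_le_sum (fun s _ => mul_le_mul_of_nonneg_left (hOle s) (hw s))
      _ = ∑ y ∈ Finset.univ.filter (fun y : Fin d => (y:ℕ) ≠ 0), ∑ i : Fin n,
            ∑ s : Fin n → Fin d, (∏ j, p (s j)) * (if s i = y then (1:ℝ) else 0) := by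
          simp_rw [Finset.mul_sum]
          rw [Finset.sum_comm]
          exact Finset.sum_congr rfl (fun y _ => by rw [Finset.sum_comm])
      _ = ∑ y ∈ Finset.univ.filter (fun y : Fin d => (y:ℕ) ≠ 0), ∑ i : Fin n, p y :=
          Finset.sum_congr rfl (fun y _ => Finset.sum_congr rfl (fun i _ => marginal p hp1 i y))
      _ = ∑ y ∈ Finset.univ.filter (fun y : Fin d => (y:ℕ) ≠ 0), (n:ℝ) * p y :=
          Finset.sum_congr rfl (fun y _ => by
            rw [Finset.sum_const, Finset.card_univ, Fintype.card_fin, nsmul_eq_mul])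
      _ = (n:ℝ) * ∑ y ∈ Finset.univ.filter (fun y : Fin d => (y:ℕ) ≠ 0), p y := by
          rw [Finset.mul_sum]
      _ = (n:ℝ) * (((d:ℝ)-1) / A) := by
          congr 1
          rw [Finset.sum_congr rfl (fun y hy => hpA y (Finset.mem_filter.mp hy).2)]
          rw [Finset.sum_const, cardA hd, nsmul_eq_mul]
          have hcast : ((d - 1 : ℕ) : ℝ) = (d:ℝ) - 1 := by
            rw [Nat.cast_sub (by omega : (1:ℕ) ≤ d)]; push_cast; ring
          rw [hcast, mul_one_div]
  -- bad event mass bound (Markov)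
  have hbad : ∑ s : Fin n → Fin d, (∏ j, p (s j)) * (if G s then (0:ℝ) else 1) ≤
      (2/(d:ℝ)) * ∑ s : Fin n → Fin d, (∏ j, p (s j)) * (O s : ℝ) := by
    rw [Finset.mul_sum]
    apply Finset.sum_le_sum
    intro s _
    rw [show (2/(d:ℝ)) * ((∏ j, p (s j)) * (O s : ℝ)) = (∏ j, p (s j)) * ((2/(d:ℝ)) * (O s:ℝ))
      by ring]
    apply mul_le_mul_of_nonneg_left _ (hw s)
    by_cases hGs : G s
    · rw [if_pos hGs]
      positivity
    · rw [if_neg hGs]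
      have hcount := count_split hd s
      rw [hG] at hGs
      have hnat : (d:ℕ) ≤ 2 * O s := by simp only [hO]; omega
      have hcast : (d:ℝ) ≤ 2 * (O s:ℝ) := by exact_mod_cast hnat
      rw [div_mul_eq_mul_div, le_div_iff₀ (by linarith : (0:ℝ) < (d:ℝ))]
      linarith
  -- split the total mass
  have hsplit : ∑ s : Fin n → Fin d, (∏ j, p (s j)) * (if G s then (1:ℝ) else 0) =
      1 - ∑ s : Fin n → Fin d, (∏ j, p (s j)) * (if G s then (0:ℝ) else 1) := by
    have hpt : ∀ s : Fin n → Fin d, (∏ j, p (s j)) * (if G s then (1:ℝ) else 0) =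
        (∏ j, p (s j)) - (∏ j, p (s j)) * (if G s then (0:ℝ) else 1) := by
      intro s; by_cases h : G s <;> simp [h]
    rw [Finset.sum_congr rfl (fun s _ => hpt s), Finset.sum_sub_distrib, total_mass p hp1]
  -- numeric bound
  have hnum : (2/(d:ℝ)) * ((n:ℝ) * (((d:ℝ)-1) / A)) ≤ 1/2 := by
    have hform : (2/(d:ℝ)) * ((n:ℝ) * (((d:ℝ)-1) / A)) =
        (2*(n:ℝ)*((d:ℝ)-1)) / ((d:ℝ)*A) := by
      field_simp
    rw [hform, div_le_div_iff₀ (by positivity) (by norm_num)]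
    rw [hAdef]
    nlinarith
  have hmono : ∑ s : Fin n → Fin d, (∏ j, p (s j)) * (if G s then (1:ℝ) else 0) ≤
      ∑ s : Fin n → Fin d, (∏ j, p (s j)) *
        (if ∀ θh : Fin d → ℝ, (∀ j, |θh j| ≤ 1) →
            (∀ θ : Fin d → ℝ, (∀ j, |θ j| ≤ 1) →
              (∑ i, Real.log (softmaxB d B θ (s i))) ≤
                ∑ i, Real.log (softmaxB d B θh (s i))) →
            ∀ N : ℝ, N ≤ Real.exp B →
              (∑ y, softmaxB d B (thetaStar d n B) y *
                  (if N ≤ softmaxB d B (thetaStar d n B) y / softmaxB d B θh y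
                    then 1 else 0)) ≥ ((d : ℝ) - 1) / (10 * n)
          then (1:ℝ) else 0) :=
    Finset.sum_le_sum (fun s _ => mul_le_mul_of_nonneg_left (stepA s) (hw s))
  have h2d : 0 ≤ 2/(d:ℝ) := by positivity
  have hchain : (1:ℝ)/2 ≤
      ∑ s : Fin n → Fin d, (∏ j, p (s j)) * (if G s then (1:ℝ) else 0) := by
    rw [hsplit]
    have h1 : (2/(d:ℝ)) * ∑ s : Fin n → Fin d, (∏ j, p (s j)) * (O s : ℝ) ≤
        (2/(d:ℝ)) * ((n:ℝ) * (((d:ℝ)-1) / A)) := mul_le_mul_of_nonneg_left hEO h2d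
    linarith
  exact le_trans hchain hmono
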